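/- The reachability order on process expressions modulo branching bisimilarity is a well-founded partial order: defining [P] ≥ [P'] iff some Q ∈ [P] reaches some Q' ∈ [P'] by transitions, the inverse relation ≤ (reflexive-transitive closure) is reflexive, transitive, antisymmetric, and well-founded. -/

import Mathlib

/-- Process expressions: inaction, prefix, choice, interleaving parallel composition,
and iteration prefix. Labels are `Option A`, with `none` playing the role of τ. -/
inductive PExp (A : Type) : Type
  | nil : PExp A
  | pre : Option A → PExp A → PExp A
  | choice : PExp A → PExp A → PExp A
  | par : PExp A → PExp A → PExp A
  | star : Option A → PExp A → PExp A

namespace PExp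

/-- The labelled transition relation. -/
inductive Step {A : Type} : PExp A → Option A → PExp A → Prop
  | pre (α : Option A) (P : PExp A) : Step (PExp.pre α P) α P
  | choiceL {P α P'} (Q) : Step P α P' → Step (PExp.choice P Q) α P'
  | choiceR {Q α Q'} (P) : Step Q α Q' → Step (PExp.choice P Q) α Q'
  | parL {P α P'} (Q) : Step P α P' → Step (PExp.par P Q) α (PExp.par P' Q)
  | parR {Q α Q'} (P) : Step Q α Q' → Step (PExp.par P Q) α (PExp.par P Q')
  | star (α : Option A) (P : PExp A) : Step (PExp.star α P) α (PExp.star α P)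
  | starStep {P β P'} (α) : Step P β P' → Step (PExp.star α P) β P'

/-- P ⇒ Q : zero or more τ-steps. -/
def TauSteps {A : Type} (P Q : PExp A) : Prop :=
  Relation.ReflTransGen (fun X Y => Step X none Y) P Q

/-- P (→α) Q or (α = τ and P = Q). -/
def OptStep {A : Type} (P : PExp A) (α : Option A) (P' : PExp A) : Prop :=
  Step P α P' ∨ (α = none ∧ P = P')

/-- R is a branching bisimulation. -/
def IsBranchingBisim {A : Type} (R : PExp A → PExp A → Prop) : Prop :=
  Symmetric R ∧ ∀ P Q, R P Q → ∀ α P', Step P α P' →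
    ∃ Q'' Q', TauSteps Q Q'' ∧ OptStep Q'' α Q' ∧ R P Q'' ∧ R P' Q'

/-- Branching bisimilarity. -/
def BBisim {A : Type} (P Q : PExp A) : Prop :=
  ∃ R, IsBranchingBisim R ∧ R P Q

/-- R is a weak bisimulation. -/
def IsWeakBisim {A : Type} (R : PExp A → PExp A → Prop) : Prop :=
  Symmetric R ∧ ∀ P Q, R P Q → ∀ α P', Step P α P' →
    ∃ Q'' Q''' Q', TauSteps Q Q'' ∧ OptStep Q'' α Q''' ∧ TauSteps Q''' Q' ∧ R P' Q'

/-- Weak bisimilarity. -/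
def WBisim {A : Type} (P Q : PExp A) : Prop :=
  ∃ R, IsWeakBisim R ∧ R P Q

/-- A step with some label. -/
def AnyStep {A : Type} (P Q : PExp A) : Prop := ∃ α, Step P α Q

/-- Reachability: reflexive-transitive closure of the one-step transition relation. -/
def Reaches {A : Type} : PExp A → PExp A → Prop := Relation.ReflTransGen AnyStep

/-- P has no outgoing transitions. -/
def Deadlock {A : Type} (P : PExp A) : Prop := ∀ α Q, ¬ Step P α Q

/-- P can reach a deadlocked expression. -/
def WeaklyNormed {A : Type} (P : PExp A) : Prop := ∃ P', Reaches P P' ∧ Deadlock P'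

/-- `NormWitness P k`: there is a complete transition sequence from P to a deadlocked
expression containing exactly k non-τ transitions. -/
inductive NormWitness {A : Type} : PExp A → ℕ → Prop
  | dead {P} : Deadlock P → NormWitness P 0
  | tau {P P' k} : Step P none P' → NormWitness P' k → NormWitness P k
  | act {P a P' k} : Step P (some a) P' → NormWitness P' k → NormWitness P (k + 1)

/-- The weak norm of P is k: k is the least number of non-τ transitions in a complete
transition sequence from P. -/
def IsWeakNorm {A : Type} (P : PExp A) (k : ℕ) : Prop :=
  NormWitness P k ∧ ∀ j, NormWitness P j → k ≤ j

/-- P ⇒a Q : a weak a-step (a ≠ τ), absorbing τ-steps on both sides. -/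
def WStep {A : Type} (P : PExp A) (a : A) (Q : PExp A) : Prop :=
  ∃ P₁ Q₁, TauSteps P P₁ ∧ Step P₁ (some a) Q₁ ∧ TauSteps Q₁ Q

/-- `WChain P k`: there is a sequence of k weak (non-τ) steps starting from P. -/
inductive WChain {A : Type} : PExp A → ℕ → Prop
  | zero (P) : WChain P 0
  | succ {P a P' k} : WStep P a P' → WChain P' k → WChain P (k + 1)

/-- P is weakly bounded: some k bounds the number of non-τ steps of every sequence. -/
def WeaklyBounded {A : Type} (P : PExp A) : Prop := ∃ k, ∀ l, WChain P l → l ≤ k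

/-- The weak depth of P is k: the length of a longest transition sequence from P not
counting τ-transitions. -/
def IsWeakDepth {A : Type} (P : PExp A) (k : ℕ) : Prop :=
  WChain P k ∧ ∀ l, WChain P l → l ≤ k

/-- Indecomposability with respect to a behavioural equivalence E: P is not equivalent
to 0 nor to a parallel composition of two processes not equivalent to 0. -/
def IndecompWith {A : Type} (E : PExp A → PExp A → Prop) (P : PExp A) : Prop :=
  ¬ E P PExp.nil ∧ ∀ Q R, E P (PExp.par Q R) → E Q PExp.nil ∨ E R PExp.nil

end PExp

open PExp

/-- The transition relation on branching-bisimilarity classes, on representatives: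
[P] → [P'] if some Q ∈ [P] steps to some Q' ∈ [P']. -/
def ClsStep {A : Type} (P P' : PExp A) : Prop :=
  ∃ Q Q' α, BBisim P Q ∧ BBisim P' Q' ∧ Step Q α Q'

/-- The reachability order on classes: [X] ≤ [Y] iff [Y] →* [X]. -/
def ClsLe {A : Type} (X Y : PExp A) : Prop :=
  Relation.ReflTransGen ClsStep Y X

/-! Every transition either is the self-loop of an iteration prefix or strictly decreases the
syntactic size, and branching bisimilarity transfers reachability. Hence if `[X] < [Y]`, a
smallest representative of `[Y]` reaches, by a non-trivial sequence, a representative of `[X]`: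
the least size in the class of `X` is smaller than that in the class of `Y`. This measure gives
both antisymmetry and well-foundedness. -/

namespace PExp

variable {A : Type}

theorem TauSteps.reaches {P Q : PExp A} (h : TauSteps P Q) : Reaches P Q :=
  Relation.ReflTransGen.mono (fun _ _ hs => ⟨none, hs⟩) _ _ h

theorem OptStep.reaches {P Q : PExp A} {α : Option A} (h : OptStep P α Q) : Reaches P Q := by
  rcases h with h | ⟨-, rfl⟩
  · exact .single ⟨α, h⟩
  · exact .refl

namespace IsBranchingBisim

variable {R R₁ R₂ : PExp A → PExp A → Prop}

theorem exists_reaches_of_step (hR : IsBranchingBisim R) {P Q P' : PExp A} {α : Option A}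
    (hPQ : R P Q) (h : Step P α P') : ∃ Q', Reaches Q Q' ∧ R P' Q' := by
  obtain ⟨Q'', Q', hτ, hα, -, hR'⟩ := hR.2 P Q hPQ α P' h
  exact ⟨Q', hτ.reaches.trans hα.reaches, hR'⟩

theorem exists_reaches_of_reaches (hR : IsBranchingBisim R) {P Q P' : PExp A}
    (hPQ : R P Q) (h : Reaches P P') : ∃ Q', Reaches Q Q' ∧ R P' Q' := by
  induction h with
  | refl => exact ⟨Q, .refl, hPQ⟩
  | tail _ hstep ih =>
    obtain ⟨Q₁, hQ₁, hR₁⟩ := ih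
    obtain ⟨Q', hQ', hR'⟩ := hR.exists_reaches_of_step hR₁ hstep.choose_spec
    exact ⟨Q', hQ₁.trans hQ', hR'⟩

theorem exists_tauSteps_of_tauSteps (hR : IsBranchingBisim R) {P Q P' : PExp A}
    (hPQ : R P Q) (h : TauSteps P P') : ∃ Q', TauSteps Q Q' ∧ R P' Q' := by
  induction h with
  | refl => exact ⟨Q, .refl, hPQ⟩
  | tail _ hstep ih =>
    obtain ⟨Q₁, hQ₁, hR₁⟩ := ih
    obtain ⟨Q'', Q', hτ, hα, -, hR'⟩ := hR.2 _ _ hR₁ _ _ hstep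
    rcases hα with hα | ⟨-, rfl⟩
    · exact ⟨Q', hQ₁.trans (hτ.tail hα), hR'⟩
    · exact ⟨Q'', hQ₁.trans hτ, hR'⟩

theorem comp_transfer_step (hR₁ : IsBranchingBisim R₁) (hR₂ : IsBranchingBisim R₂)
    {P M S P' : PExp A} {α : Option A} (hPM : R₁ P M) (hMS : R₂ M S) (h : Step P α P') :
    ∃ S'' S', TauSteps S S'' ∧ OptStep S'' α S' ∧
      Relation.Comp R₁ R₂ P S'' ∧ Relation.Comp R₁ R₂ P' S' := by
  obtain ⟨M'', M', hτM, hαM, hPM'', hPM'⟩ := hR₁.2 P M hPM α P' h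
  obtain ⟨S'', hτS, hMS''⟩ := hR₂.exists_tauSteps_of_tauSteps hMS hτM
  rcases hαM with hαM | ⟨rfl, rfl⟩
  · obtain ⟨T'', T', hτT, hαT, hMT'', hMT'⟩ := hR₂.2 _ _ hMS'' _ _ hαM
    exact ⟨T'', T', hτS.trans hτT, hαT, ⟨M'', hPM'', hMT''⟩, ⟨M', hPM', hMT'⟩⟩
  · exact ⟨S'', S'', hτS, .inr ⟨rfl, rfl⟩, ⟨M'', hPM'', hMS''⟩, ⟨M'', hPM', hMS''⟩⟩

theorem comp_sup_comp (hR₁ : IsBranchingBisim R₁) (hR₂ : IsBranchingBisim R₂) :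
    IsBranchingBisim (Relation.Comp R₁ R₂ ⊔ Relation.Comp R₂ R₁) := by
  refine ⟨?_, ?_⟩
  · rintro P S (⟨M, hPM, hMS⟩ | ⟨M, hPM, hMS⟩)
    · exact .inr ⟨M, hR₂.1 hMS, hR₁.1 hPM⟩
    · exact .inl ⟨M, hR₁.1 hMS, hR₂.1 hPM⟩
  · rintro P S (⟨M, hPM, hMS⟩ | ⟨M, hPM, hMS⟩) α P' h
    · obtain ⟨S'', S', hτ, hα, h'', h'⟩ := comp_transfer_step hR₁ hR₂ hPM hMS h
      exact ⟨S'', S', hτ, hα, .inl h'', .inl h'⟩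
    · obtain ⟨S'', S', hτ, hα, h'', h'⟩ := comp_transfer_step hR₂ hR₁ hPM hMS h
      exact ⟨S'', S', hτ, hα, .inr h'', .inr h'⟩

end IsBranchingBisim

namespace BBisim

theorem refl (P : PExp A) : BBisim P P := by
  refine ⟨Eq, ⟨fun _ _ h => h.symm, ?_⟩, rfl⟩
  rintro P _ rfl α P' h
  exact ⟨P, P', .refl, .inl h, rfl, rfl⟩

theorem symm {P Q : PExp A} : BBisim P Q → BBisim Q P
  | ⟨R, hR, hPQ⟩ => ⟨R, hR, hR.1 hPQ⟩

theorem trans {P Q S : PExp A} : BBisim P Q → BBisim Q S → BBisim P S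
  | ⟨_, hR₁, hPQ⟩, ⟨_, hR₂, hQS⟩ => ⟨_, hR₁.comp_sup_comp hR₂, .inl ⟨Q, hPQ, hQS⟩⟩

theorem exists_reaches_of_reaches {P Q P' : PExp A} :
    BBisim P Q → Reaches P P' → ∃ Q', Reaches Q Q' ∧ BBisim P' Q'
  | ⟨R, hR, hPQ⟩, h =>
    let ⟨Q', hQ', hR'⟩ := hR.exists_reaches_of_reaches hPQ h
    ⟨Q', hQ', R, hR, hR'⟩

theorem exists_reaches_of_step {P Q P' : PExp A} {α : Option A} (hPQ : BBisim P Q)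
    (h : Step P α P') : ∃ Q', Reaches Q Q' ∧ BBisim P' Q' :=
  hPQ.exists_reaches_of_reaches (.single ⟨α, h⟩)

end BBisim

def size : PExp A → ℕ
  | nil => 0
  | pre _ P => size P + 1
  | choice P Q => size P + size Q + 1
  | par P Q => size P + size Q + 1
  | star _ P => size P + 1

theorem Step.eq_or_size_lt {P P' : PExp A} {α : Option A} (h : Step P α P') :
    P' = P ∨ size P' < size P := by
  induction h with
  | pre => exact .inr (Nat.lt_succ_self _)
  | star => exact .inl rfl
  | parL _ _ ih | parR _ _ ih =>
    rcases ih with rfl | h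
    · exact .inl rfl
    · right; simp only [size]; omega
  | choiceL _ _ ih | choiceR _ _ ih | starStep _ _ ih =>
    right
    rcases ih with rfl | h <;> simp only [size] <;> omega

theorem Reaches.eq_or_size_lt {P Q : PExp A} (h : Reaches P Q) : Q = P ∨ size Q < size P := by
  induction h with
  | refl => exact .inl rfl
  | tail _ hstep ih =>
    obtain ⟨α, hstep⟩ := hstep
    rcases hstep.eq_or_size_lt, ih with ⟨rfl | h₁, rfl | h₂⟩
    · exact .inl rfl
    all_goals omega

noncomputable def classSize (P : PExp A) : ℕ :=
  sInf (size '' {Q | BBisim P Q})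

theorem classSize_le_size {P Q : PExp A} (h : BBisim P Q) : classSize P ≤ size Q :=
  Nat.sInf_le ⟨Q, h, rfl⟩

theorem exists_bbisim_size_eq_classSize (P : PExp A) : ∃ Q, BBisim P Q ∧ size Q = classSize P :=
  Nat.sInf_mem (s := size '' {Q | BBisim P Q}) ⟨size P, P, BBisim.refl P, rfl⟩

end PExp

namespace ClsLe

variable {A : Type}

theorem exists_reaches_bbisim {X Y : PExp A} (h : ClsLe X Y) :
    ∃ X', Reaches Y X' ∧ BBisim X X' := by
  induction h with
  | refl => exact ⟨Y, .refl, BBisim.refl Y⟩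
  | tail _ hstep ih =>
    obtain ⟨Z', hYZ', hZZ'⟩ := ih
    obtain ⟨Q, Q', α, hZQ, hXQ', hQQ'⟩ := hstep
    obtain ⟨X', hZ'X', hQ'X'⟩ := (hZQ.symm.trans hZZ').exists_reaches_of_step hQQ'
    exact ⟨X', hYZ'.trans hZ'X', hXQ'.trans hQ'X'⟩

theorem classSize_lt {X Y : PExp A} (h : ClsLe X Y) (hXY : ¬ BBisim X Y) :
    classSize X < classSize Y := by
  obtain ⟨X₁, hYX₁, hXX₁⟩ := h.exists_reaches_bbisim
  obtain ⟨Y₀, hYY₀, hY₀⟩ := exists_bbisim_size_eq_classSize Y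
  obtain ⟨X₀, hY₀X₀, hX₁X₀⟩ := hYY₀.exists_reaches_of_reaches hYX₁
  have hXX₀ : BBisim X X₀ := hXX₁.trans hX₁X₀
  rcases hY₀X₀.eq_or_size_lt with rfl | hlt
  · exact absurd (hXX₀.trans hYY₀.symm) hXY
  · exact (classSize_le_size hXX₀).trans_lt (hY₀ ▸ hlt)

end ClsLe

/-- The reachability order on process expressions modulo branching bisimilarity is a
well-founded partial order: reflexive, transitive, antisymmetric (up to branching
bisimilarity), and well-founded. -/
theorem cls_reachability_wf_partial_order (A : Type) :
    (∀ X : PExp A, ClsLe X X) ∧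
    (∀ X Y Z : PExp A, ClsLe X Y → ClsLe Y Z → ClsLe X Z) ∧
    (∀ X Y : PExp A, ClsLe X Y → ClsLe Y X → BBisim X Y) ∧
    WellFounded (fun X Y : PExp A => ClsLe X Y ∧ ¬ BBisim X Y) := by
  refine ⟨fun _ => .refl, fun _ _ _ hXY hYZ => hYZ.trans hXY, fun X Y hXY hYX => ?_, ?_⟩
  · by_contra hne
    exact lt_asymm (hXY.classSize_lt hne) (hYX.classSize_lt fun h => hne h.symm)
  · exact Subrelation.wf (fun h => h.1.classSize_lt h.2) (InvImage.wf classSize wellFounded_lt)
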